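/- arXiv:1205.5943 — 3 statements merged into one kernel-verified Lean document; each statement's English description precedes it below -/
import Mathlib

section
/- Let g : ℕ → ℝ satisfy g(0) = 1, g(n) defined by x·g(n) = f(n+1) + f(n) where f is the Laplacian characteristic polynomial sequence of paths evaluated at x, with y a root of y² − (x−2)y + 1 = 0, y ∉ {0, 1, −1}, x ≠ 0. Then g(n) = (y^{2n+1} − 1)/(y^{n+1} − y^n) for all n ≥ 0. -/
theorem charpoly_Bn_closed_form (x y : ℝ) (hx : x ≠ 4) (hx0 : x ≠ 0)
    (hy : y ^ 2 - (x - 2) * y + 1 = 0) (hy0 : y ≠ 0) (hy1 : y ≠ 1) (hym1 : y ≠ -1)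
    (f g : ℕ → ℝ) (hf0 : f 0 = 0) (hf1 : f 1 = x)
    (hrec : ∀ n : ℕ, 1 ≤ n → f (n + 1) = (x - 2) * f n - f (n - 1))
    (hg0 : g 0 = 1) (hg : ∀ n : ℕ, x * g n = f (n + 1) + f n) :
    ∀ n : ℕ, g n = (y ^ (2 * n + 1) - 1) / (y ^ (n + 1) - y ^ n) := by
  have hy1' : y - 1 ≠ 0 := sub_ne_zero.mpr hy1
  have hyp1 : y + 1 ≠ 0 := by
    intro h; apply hym1; linarith
  have hxy : x * y = (y + 1) ^ 2 := by linear_combination -hy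
  -- closed form for f
  have hP : ∀ n : ℕ, f n * (y ^ n * (y - 1)) = (y + 1) * ((y ^ n) ^ 2 - 1) ∧
      f (n + 1) * (y ^ (n + 1) * (y - 1)) = (y + 1) * ((y ^ (n + 1)) ^ 2 - 1) := by
    intro n
    induction n with
    | zero =>
      constructor
      · simp [hf0]
      · rw [hf1]; linear_combination (y - 1) * hxy
    | succ k ih =>
      refine ⟨ih.2, ?_⟩
      have hr := hrec (k + 1) (by omega)
      simp only [Nat.add_sub_cancel] at hr
      rw [hr]
      have i0 := ih.1
      have i1 := ih.2
      linear_combination (x - 2) * y * i1 - y ^ 2 * i0 -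
        ((y + 1) * ((y ^ k) ^ 2 * y ^ 2 - 1)) * hy
  intro n
  have hzn : y ^ n ≠ 0 := pow_ne_zero _ hy0
  have hne : y ^ (n + 1) - y ^ n ≠ 0 := by
    have : y ^ (n + 1) - y ^ n = y ^ n * (y - 1) := by ring
    rw [this]
    exact mul_ne_zero hzn hy1'
  have i0 := (hP n).1
  have i1 := (hP n).2
  have hgn := hg n
  have key : (y + 1) ^ 2 * (g n * (y ^ n * (y - 1))) =
      (y + 1) ^ 2 * (y * (y ^ n) ^ 2 - 1) := by
    linear_combination (-(g n * y ^ n * (y - 1))) * hxy +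
      y * y ^ n * (y - 1) * hgn + i1 + y * i0
  have key' := mul_left_cancel₀ (pow_ne_zero 2 hyp1) key
  rw [eq_div_iff hne]
  linear_combination key'
end

section
/- Let n ≥ 2 and let t_1, …, t_n be integers with t_1 ≥ −4, t_i ≥ −1 for 2 ≤ i ≤ n−1, and t_n ≥ 0, satisfying Σ_{i=1}^n t_i = 0 and Σ_{i=1}^n t_i² + 4·Σ_{i=2}^{n−1} t_i + 10·t_1 + 2·t_n = 0. Define a = Σ_{i=2}^{n−1} t_i² + t_n² − 2t_n. Then t_1² + 6t_1 + a = 0, and consequently a ∈ {0, 5, 8, 9}. -/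
/-!
Substituting `Σ_{i=2}^{n-1} t_i = -t_1 - t_n` from the linear relation into the quadratic one
gives `t_1² + 6 t_1 + a = 0`, i.e. `a = 9 - (t_1 + 3)²`. Since `a ≥ (t_n - 1)² - 1 ≥ -1` and
`t_1 ≥ -4`, this leaves `t_1 ∈ {-4, …, 0}`, hence `a ∈ {8, 9, 8, 5, 0}`.
-/

open Finset

theorem sum_Icc_one_eq_add_sum_Icc_add {M : Type*} [AddCommMonoid M] {n : ℕ} (hn : 2 ≤ n)
    (f : ℕ → M) : ∑ i ∈ Icc 1 n, f i = f 1 + ∑ i ∈ Icc 2 (n - 1), f i + f n := by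
  obtain ⟨m, rfl⟩ : ∃ m, n = m + 2 := ⟨n - 2, by omega⟩
  rw [sum_Icc_succ_top (by omega), Icc_eq_cons_Ioc (by omega), sum_cons,
    ← Icc_add_one_left_eq_Ioc]
  rfl

theorem mem_of_sq_add_six_mul_add_eq_zero {x a : ℤ} (hx : -4 ≤ x) (ha : -1 ≤ a)
    (h : x ^ 2 + 6 * x + a = 0) : a ∈ ({0, 5, 8, 9} : Set ℤ) := by
  have hx0 : x ≤ 0 := by nlinarith
  simp only [Set.mem_insert_iff, Set.mem_singleton_iff]
  interval_cases x <;> omega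

theorem propeller_L_degree_diophantine_general (n : ℕ) (hn : 2 ≤ n) (t : ℕ → ℤ) (a : ℤ)
    (h1 : t 1 ≥ -4)
    (hsum : ∑ i ∈ Finset.Icc 1 n, t i = 0)
    (hsq : ∑ i ∈ Finset.Icc 1 n, (t i) ^ 2 + 4 * ∑ i ∈ Finset.Icc 2 (n - 1), t i
      + 10 * t 1 + 2 * t n = 0)
    (ha : a = ∑ i ∈ Finset.Icc 2 (n - 1), (t i) ^ 2 + (t n) ^ 2 - 2 * t n) :
    (t 1) ^ 2 + 6 * t 1 + a = 0 ∧ a ∈ ({0, 5, 8, 9} : Set ℤ) := by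
  rw [sum_Icc_one_eq_add_sum_Icc_add hn] at hsum hsq
  have key : (t 1) ^ 2 + 6 * t 1 + a = 0 := by linear_combination hsq - 4 * hsum + ha
  have ha_ge : -1 ≤ a := by
    have : 0 ≤ ∑ i ∈ Icc 2 (n - 1), (t i) ^ 2 := sum_nonneg fun i _ ↦ sq_nonneg (t i)
    nlinarith [sq_nonneg (t n - 1)]
  exact ⟨key, mem_of_sq_add_six_mul_add_eq_zero h1 ha_ge key⟩

theorem propeller_L_degree_diophantine (n : ℕ) (hn : 2 ≤ n) (t : ℕ → ℤ) (a : ℤ)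
    (h1 : t 1 ≥ -4) (hmid : ∀ i : ℕ, 2 ≤ i → i ≤ n - 1 → t i ≥ -1) (hlast : t n ≥ 0)
    (hsum : ∑ i ∈ Finset.Icc 1 n, t i = 0)
    (hsq : ∑ i ∈ Finset.Icc 1 n, (t i) ^ 2 + 4 * ∑ i ∈ Finset.Icc 2 (n - 1), t i
      + 10 * t 1 + 2 * t n = 0)
    (ha : a = ∑ i ∈ Finset.Icc 2 (n - 1), (t i) ^ 2 + (t n) ^ 2 - 2 * t n) :
    (t 1) ^ 2 + 6 * t 1 + a = 0 ∧ a ∈ ({0, 5, 8, 9} : Set ℤ) :=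
  propeller_L_degree_diophantine_general n hn t a h1 hsum hsq ha
end

section
/- Let n ≥ 2 and let t_1, …, t_n be integers with t_1 ≥ −5, t_i ≥ −2 for 2 ≤ i ≤ n−1, t_n ≥ −1, satisfying Σ t_i = 0 and Σ t_i² + 4Σ_{i=2}^{n−1} t_i + 10 t_1 + 2 t_n = 0. Then the multiset {5 + t_1, 2 + t_2, …, 2 + t_{n−1}, 1 + t_n} is one of: {5, 2^{n−2}, 1}, {4², 2^{n−4}, 1²}, {4, 3³, 2^{n−7}, 1³}, {3⁶, 2^{n−10}, 1⁴}, {4, 3², 2^{n−4}, 0}, or {3⁵, 2^{n−7}, 1, 0}. -/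
/-!
Write `d` for the entries of `M`. The two hypotheses say exactly that `∑ (d - 2) = 2` and, after
subtracting four times the first, `∑ (d - 2)² = 10`. Since `d ≥ 0`, the second moment confines
every degree to `0, …, 5`, so `M` is determined by the numbers `c₀, …, c₅` of entries equal to
`0, …, 5`. The moments become `c₃ + 2c₄ + 3c₅ = 2 + 2c₀ + c₁` and
`4c₀ + c₁ + c₃ + 4c₄ + 9c₅ = 10`, which have exactly six solutions in `ℕ`; `c₂` is then fixed
by `card M = n`.
-/

open Multiset

theorem Multiset.sum_replicate_count_of_subset {α : Type*} [DecidableEq α] {M : Multiset α}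
    {T : Finset α} (hMT : ∀ x ∈ M, x ∈ T) : ∑ a ∈ T, replicate (M.count a) a = M := by
  simp_rw [← nsmul_singleton]
  rw [← Finset.sum_subset (fun a ha => hMT a (mem_toFinset.1 ha)), toFinset_sum_count_nsmul_eq]
  intro a _ ha
  rw [count_eq_zero_of_notMem (mt mem_toFinset.2 ha), zero_nsmul]

theorem le_five_of_sum_sq_sub_two_le {M : Multiset ℤ}
    (hsq : (M.map fun x => (x - 2) ^ 2).sum ≤ 10) {x : ℤ} (hx : x ∈ M) : x ≤ 5 := by
  have : (x - 2) ^ 2 ≤ (M.map fun x => (x - 2) ^ 2).sum :=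
    single_le_sum (fun y hy => by obtain ⟨z, -, rfl⟩ := mem_map.1 hy; positivity) _
      (mem_map_of_mem _ hx)
  nlinarith

theorem exists_eq_replicate_of_mem_Icc {M : Multiset ℤ} (hM : ∀ x ∈ M, 0 ≤ x ∧ x ≤ 5) :
    ∃ c : ℤ → ℕ, M = replicate (c 0) 0 + replicate (c 1) 1 + replicate (c 2) 2 +
      replicate (c 3) 3 + replicate (c 4) 4 + replicate (c 5) 5 := by
  refine ⟨fun k => M.count k, ?_⟩
  have hdecomp := sum_replicate_count_of_subset (T := Finset.Icc 0 5) (M := M)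
    (fun x hx => Finset.mem_Icc.2 (hM x hx))
  have hIcc : Finset.Icc (0 : ℤ) 5 = {0, 1, 2, 3, 4, 5} := by decide
  conv_lhs => rw [← hdecomp, hIcc]
  simp [add_assoc]

theorem degree_counts_of_moments (c₀ c₁ c₃ c₄ c₅ : ℕ)
    (hsum : c₃ + 2 * c₄ + 3 * c₅ = 2 + 2 * c₀ + c₁)
    (hsq : 4 * c₀ + c₁ + c₃ + 4 * c₄ + 9 * c₅ = 10) :
    (c₀ = 0 ∧ c₁ = 1 ∧ c₃ = 0 ∧ c₄ = 0 ∧ c₅ = 1) ∨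
    (c₀ = 0 ∧ c₁ = 2 ∧ c₃ = 0 ∧ c₄ = 2 ∧ c₅ = 0) ∨
    (c₀ = 0 ∧ c₁ = 3 ∧ c₃ = 3 ∧ c₄ = 1 ∧ c₅ = 0) ∨
    (c₀ = 0 ∧ c₁ = 4 ∧ c₃ = 6 ∧ c₄ = 0 ∧ c₅ = 0) ∨
    (c₀ = 1 ∧ c₁ = 0 ∧ c₃ = 2 ∧ c₄ = 1 ∧ c₅ = 0) ∨
    (c₀ = 1 ∧ c₁ = 1 ∧ c₃ = 5 ∧ c₄ = 0 ∧ c₅ = 0) := by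
  have hdiff : 3 * c₀ + c₁ + c₄ + 3 * c₅ = 4 := by omega
  have hadd : c₀ + c₃ + 3 * c₄ + 6 * c₅ = 6 := by omega
  have hc₀ : c₀ ≤ 1 := by omega
  have hc₄ : c₄ ≤ 2 := by omega
  have hc₅ : c₅ ≤ 1 := by omega
  interval_cases c₀ <;> interval_cases c₄ <;> interval_cases c₅ <;> omega

theorem cases_of_sum_sub_two_eq_two_of_sum_sq_eq_ten (M : Multiset ℤ) (hnn : ∀ x ∈ M, 0 ≤ x)
    (hsum : (M.map (· - 2)).sum = 2) (hsq : (M.map fun x => (x - 2) ^ 2).sum = 10) :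
    M = 5 ::ₘ 1 ::ₘ replicate (card M - 2) 2 ∨
    M = replicate 2 4 + replicate (card M - 4) 2 + replicate 2 1 ∨
    M = 4 ::ₘ (replicate 3 3 + replicate (card M - 7) 2 + replicate 3 1) ∨
    M = replicate 6 3 + replicate (card M - 10) 2 + replicate 4 1 ∨
    M = 4 ::ₘ 0 ::ₘ (replicate 2 3 + replicate (card M - 4) 2) ∨
    M = 0 ::ₘ 1 ::ₘ (replicate 5 3 + replicate (card M - 7) 2) := by
  obtain ⟨c, hc⟩ := exists_eq_replicate_of_mem_Icc fun x hx =>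
    ⟨hnn x hx, le_five_of_sum_sq_sub_two_le hsq.le hx⟩
  rw [hc] at hsum hsq ⊢
  simp only [map_add, map_replicate, sum_add, sum_replicate, nsmul_eq_mul] at hsum hsq
  norm_num at hsum hsq
  rcases degree_counts_of_moments (c 0) (c 1) (c 3) (c 4) (c 5) (by omega) (by omega) with
    ⟨h0, h1, h3, h4, h5⟩ | ⟨h0, h1, h3, h4, h5⟩ | ⟨h0, h1, h3, h4, h5⟩ |
    ⟨h0, h1, h3, h4, h5⟩ | ⟨h0, h1, h3, h4, h5⟩ | ⟨h0, h1, h3, h4, h5⟩ <;>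
  simp only [h0, h1, h3, h4, h5, card_add, card_replicate] <;>
  simp [add_comm, add_left_comm, add_assoc, ← singleton_add]

theorem Finset.sum_Icc_one_eq_add_add_sum_Icc {β : Type*} [AddCommMonoid β] {n : ℕ} (hn : 2 ≤ n)
    (f : ℕ → β) : ∑ i ∈ Icc 1 n, f i = f 1 + f n + ∑ i ∈ Icc 2 (n - 1), f i := by
  have hsplit : Icc 1 n = insert 1 (insert n (Icc 2 (n - 1))) := by
    ext i; simp only [mem_Icc, mem_insert]; omega
  rw [hsplit, sum_insert (by simp only [mem_insert, mem_Icc]; omega),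
    sum_insert (by simp only [mem_Icc]; omega), add_assoc]

theorem propeller_Q_degree_sequences (n : ℕ) (hn : 2 ≤ n) (t : ℕ → ℤ)
    (h1 : t 1 ≥ -5) (hmid : ∀ i : ℕ, 2 ≤ i → i ≤ n - 1 → t i ≥ -2) (hlast : t n ≥ -1)
    (hsum : ∑ i ∈ Finset.Icc 1 n, t i = 0)
    (hsq : ∑ i ∈ Finset.Icc 1 n, (t i) ^ 2 + 4 * ∑ i ∈ Finset.Icc 2 (n - 1), t i
      + 10 * t 1 + 2 * t n = 0)
    (M : Multiset ℤ)
    (hM : M = (5 + t 1) ::ₘ (1 + t n) ::ₘ ((Finset.Icc 2 (n - 1)).val.map fun i => 2 + t i)) :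
    M = 5 ::ₘ 1 ::ₘ Multiset.replicate (n - 2) 2 ∨
    M = Multiset.replicate 2 4 + Multiset.replicate (n - 4) 2 + Multiset.replicate 2 1 ∨
    M = 4 ::ₘ (Multiset.replicate 3 3 + Multiset.replicate (n - 7) 2 + Multiset.replicate 3 1) ∨
    M = Multiset.replicate 6 3 + Multiset.replicate (n - 10) 2 + Multiset.replicate 4 1 ∨
    M = 4 ::ₘ 0 ::ₘ (Multiset.replicate 2 3 + Multiset.replicate (n - 4) 2) ∨
    M = 0 ::ₘ 1 ::ₘ (Multiset.replicate 5 3 + Multiset.replicate (n - 7) 2) := by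
  rw [Finset.sum_Icc_one_eq_add_add_sum_Icc hn] at hsum hsq
  have hcard : card M = n := by
    rw [hM, card_cons, card_cons, card_map, ← Finset.card_def, Nat.card_Icc]
    omega
  have hnn : ∀ x ∈ M, 0 ≤ x := by
    rw [hM]
    simp only [mem_cons, mem_map, Finset.mem_val, Finset.mem_Icc]
    rintro x (rfl | rfl | ⟨i, ⟨hi2, hin⟩, rfl⟩)
    · omega
    · omega
    · linarith [hmid i hi2 hin]
  have hsum' : (M.map (· - 2)).sum = 2 := by
    simp only [hM, map_cons, sum_cons, map_map, Function.comp_def, add_sub_cancel_left,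
      ← Finset.sum_eq_multiset_sum]
    linarith
  have hsq' : (M.map fun x => (x - 2) ^ 2).sum = 10 := by
    simp only [hM, map_cons, sum_cons, map_map, Function.comp_def, add_sub_cancel_left,
      ← Finset.sum_eq_multiset_sum]
    linear_combination hsq - 4 * hsum
  simpa only [hcard] using cases_of_sum_sub_two_eq_two_of_sum_sq_eq_ten M hnn hsum' hsq'
end
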